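/- arXiv:2308.12781 — 2 statements merged into one kernel-verified Lean document; each statement's English description precedes it below -/
import Mathlib

section
/- Let T be a singular n×n upper triangular pencil over ℂ such that T has normal rank n−1 and T has no eigenvalues (i.e., rank T(μ) = n−1 for all μ ∈ ℂ ∪ {∞}). If the uppermost zero diagonal entry of T is in position (k+1, k+1), then the unique right minimal index of T equals k. -/
open Polynomial Matrix

variable {n : ℕ}

/-- The pencil `A + λ B` as a matrix over the rational function field `ℂ(λ)`. -/
noncomputable def pencilRat (A B : Matrix (Fin n) (Fin n) ℂ) :
    Matrix (Fin n) (Fin n) (RatFunc ℂ) :=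
  Matrix.of fun i j =>
    algebraMap ℂ (RatFunc ℂ) (A i j) + RatFunc.X * algebraMap ℂ (RatFunc ℂ) (B i j)

def UpperTri (M : Matrix (Fin n) (Fin n) ℂ) : Prop :=
  ∀ i j : Fin n, j < i → M i j = 0

/-- The set of degrees of nonzero polynomial vectors in the right null space of the
pencil `A + λ B`; its least element is the right minimal index when the nullity is 1. -/
noncomputable def kernelDegrees (A B : Matrix (Fin n) (Fin n) ℂ) : Set ℕ :=
  {d : ℕ | ∃ v : Fin n → Polynomial ℂ, v ≠ 0 ∧
    (pencilRat A B).mulVec (fun i => algebraMap (Polynomial ℂ) (RatFunc ℂ) (v i)) = 0 ∧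
    d = Finset.univ.sup fun i => (v i).natDegree}

/-!
Since `T` is upper triangular with `T k k = 0`, its first `k + 1` columns live in the first `k`
rows. The signed maximal minors of this leading `k × (k + 1)` block, padded with zeros, therefore
form a polynomial null vector `w` of `T` (Cramer's rule). Comparing the rank of any matrix with the
rank of its leading columns shows that the leading block of `T(μ)` has full row rank `k` whenever
`rank T(μ) = n - 1`. At `μ = ∞` this makes the `λ^k`-coefficients of the entries of `w` (the signed
minors of the block of `B`) not all zero, so `w` has degree exactly `k`; at finite `μ` it says the
entries of `w` have no common root. As the rational null space is a line, every polynomial null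
vector is `f • w` with `f ∈ ℂ(λ)`, and coprimality of the entries of `w` forces `f` to be a
polynomial, so its degree is at least `k`.
-/

namespace Matrix

variable {R : Type*} [CommRing R] {s : ℕ}

def signedMinors (W : Matrix (Fin s) (Fin (s + 1)) R) : Fin (s + 1) → R :=
  fun j => (-1) ^ (j : ℕ) * (W.submatrix id j.succAbove).det

theorem det_of_vecCons (x : Fin (s + 1) → R) (W : Matrix (Fin s) (Fin (s + 1)) R) :
    (of (vecCons x W)).det = x ⬝ᵥ signedMinors W := by
  rw [det_succ_row_zero, dotProduct]
  refine Finset.sum_congr rfl fun j _ => ?_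
  simp only [signedMinors, of_apply]
  exact (mul_assoc _ _ _).trans (mul_left_comm _ _ _)

theorem mulVec_signedMinors (W : Matrix (Fin s) (Fin (s + 1)) R) :
    W *ᵥ signedMinors W = 0 := by
  ext i
  rw [mulVec, ← det_of_vecCons, Pi.zero_apply]
  exact det_zero_of_row_eq (Fin.succ_ne_zero i).symm rfl

theorem signedMinors_map {S : Type*} [CommRing S] (f : R →+* S)
    (W : Matrix (Fin s) (Fin (s + 1)) R) :
    signedMinors (W.map f) = fun j => f (signedMinors W j) := by
  ext j
  simp [signedMinors, RingHom.map_det, RingHom.mapMatrix_apply, submatrix_map]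

theorem signedMinors_ne_zero {K : Type*} [Field K] (W : Matrix (Fin s) (Fin (s + 1)) K)
    (hW : s ≤ W.rank) : signedMinors W ≠ 0 := by
  have hrows : LinearIndependent K W.row := by
    rw [linearIndependent_iff_card_eq_finrank_span, Set.finrank, ← rank_eq_finrank_span_row]
    exact le_antisymm (by simpa using hW) W.rank_le_card_height
  obtain ⟨x, hx⟩ := exists_linearIndependent_cons_of_lt_finrank hrows (by simp)
  have hdet : (of (vecCons x W)).det ≠ 0 :=
    ((isUnit_iff_isUnit_det _).mp (linearIndependent_rows_iff_isUnit.mp hx)).ne_zero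
  intro h
  rw [det_of_vecCons, h, dotProduct_zero] at hdet
  exact hdet rfl

theorem natDegree_signedMinors_X_smul_add_le (A B : Matrix (Fin s) (Fin (s + 1)) R)
    (j : Fin (s + 1)) : (signedMinors ((X : R[X]) • B.map C + A.map C) j).natDegree ≤ s := by
  have h := natDegree_det_X_add_C_le (B.submatrix id j.succAbove) (A.submatrix id j.succAbove)
  rw [Fintype.card_fin] at h
  have hsign : ((-1) ^ (j : ℕ) : R[X]) = C ((-1) ^ (j : ℕ)) := by simp
  simp only [signedMinors, hsign]
  exact (natDegree_C_mul_le _ _).trans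
    (by simpa [submatrix_add, submatrix_smul, submatrix_map] using h)

theorem coeff_signedMinors_X_smul_add (A B : Matrix (Fin s) (Fin (s + 1)) R)
    (j : Fin (s + 1)) :
    (signedMinors ((X : R[X]) • B.map C + A.map C) j).coeff s = signedMinors B j := by
  have h := coeff_det_X_add_C_card (B.submatrix id j.succAbove) (A.submatrix id j.succAbove)
  rw [Fintype.card_fin] at h
  have hsign : ((-1) ^ (j : ℕ) : R[X]) = C ((-1) ^ (j : ℕ)) := by simp
  simp only [signedMinors, hsign, coeff_C_mul]
  simpa [submatrix_add, submatrix_smul, submatrix_map] using congrArg ((-1) ^ (j : ℕ) * ·) h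

theorem eval_signedMinors_X_smul_add (A B : Matrix (Fin s) (Fin (s + 1)) R) (μ : R)
    (j : Fin (s + 1)) :
    (signedMinors ((X : R[X]) • B.map C + A.map C) j).eval μ = signedMinors (A + μ • B) j := by
  have hmap : ((X : R[X]) • B.map C + A.map C).map (evalRingHom μ) = A + μ • B := by
    ext a b
    simp only [map_apply, add_apply, smul_apply, smul_eq_mul, coe_evalRingHom, eval_add,
      eval_mul, eval_X, eval_C]
    ring
  rw [← hmap, signedMinors_map]
  rfl

end Matrix

section Rank

variable {K l m ι : Type*} [Field K] [Fintype m]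

theorem Matrix.rank_le_rank_submatrix_of_row_eq_zero [Fintype l] [Fintype ι] (M : Matrix l m K)
    (g : ι → l) (hg : ∀ i ∉ Set.range g, M i = 0) : M.rank ≤ (M.submatrix g id).rank := by
  rw [rank_eq_finrank_span_row, rank_eq_finrank_span_row]
  refine Submodule.finrank_mono (Submodule.span_le.mpr ?_)
  rintro _ ⟨i, rfl⟩
  by_cases hi : i ∈ Set.range g
  · obtain ⟨i', rfl⟩ := hi
    exact Submodule.subset_span ⟨i', rfl⟩
  · simp [row, hg i hi]

theorem Matrix.rank_le_rank_submatrix_add_card [Fintype l] [Fintype ι] (M : Matrix l m K)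
    (f : ι → m) (hf : f.Injective) :
    M.rank ≤ (M.submatrix id f).rank + (Fintype.card m - Fintype.card ι) := by
  classical
  let rest : {j // j ∉ Set.range f} → l → K := fun j => M.col j
  have hspan : Submodule.span K (Set.range M.col) ≤
      Submodule.span K (Set.range (M.submatrix id f).col) ⊔ Submodule.span K (Set.range rest) := by
    refine Submodule.span_le.mpr ?_
    rintro _ ⟨j, rfl⟩
    by_cases hj : j ∈ Set.range f
    · obtain ⟨j', rfl⟩ := hj
      exact Submodule.mem_sup_left (Submodule.subset_span ⟨j', rfl⟩)
    · exact Submodule.mem_sup_right (Submodule.subset_span ⟨⟨j, hj⟩, rfl⟩)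
  have hcard : Fintype.card {j // j ∉ Set.range f} = Fintype.card m - Fintype.card ι := by
    rw [Fintype.card_subtype_compl, Set.card_range_of_injective hf]
  rw [rank_eq_finrank_span_cols, rank_eq_finrank_span_cols, ← hcard]
  exact (Submodule.finrank_mono hspan).trans
    ((Submodule.finrank_add_le_finrank_add_finrank _ _).trans
      (Nat.add_le_add_left (finrank_range_le_card rest) _))

theorem Matrix.exists_smul_eq_of_mulVec_eq_zero (M : Matrix l m K)
    (hM : Fintype.card m ≤ M.rank + 1) {x y : m → K} (hx : M *ᵥ x = 0) (hy : M *ᵥ y = 0)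
    (hy0 : y ≠ 0) : ∃ c : K, x = c • y := by
  have hker : Module.finrank K (LinearMap.ker M.mulVecLin) = 1 := by
    have hpos : 0 < Module.finrank K (LinearMap.ker M.mulVecLin) :=
      Module.finrank_pos_iff_exists_ne_zero.mpr ⟨⟨y, hy⟩, fun h => hy0 (congrArg Subtype.val h)⟩
    have hsum := LinearMap.finrank_range_add_finrank_ker M.mulVecLin
    rw [Module.finrank_fintype_fun_eq_card] at hsum
    have hrank : M.rank = Module.finrank K (LinearMap.range M.mulVecLin) := rfl
    omega
  obtain ⟨c, hc⟩ := (finrank_eq_one_iff_of_nonzero' (⟨y, hy⟩ : LinearMap.ker M.mulVecLin)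
    fun h => hy0 (congrArg Subtype.val h)).mp hker ⟨x, hx⟩
  exact ⟨c, congrArg Subtype.val hc.symm⟩

end Rank

theorem Polynomial.exists_eq_smul_of_smul_eq_smul {K ι : Type*} [Field K] [IsAlgClosed K]
    [Fintype ι] {c v : ι → K[X]} (hc : ∀ μ, ∃ j, (c j).eval μ ≠ 0) {p q : K[X]} (hq : q ≠ 0)
    (h : q • v = p • c) : ∃ r : K[X], v = r • c := by
  classical
  have hunit : IsUnit (Finset.univ.gcd c) := by
    by_contra hnu
    obtain ⟨μ, hμ⟩ := IsAlgClosed.exists_root _ (mt isUnit_iff_degree_eq_zero.mpr hnu)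
    obtain ⟨j, hj⟩ := hc μ
    exact hj (eval_eq_zero_of_dvd_of_eval_eq_zero (Finset.gcd_dvd (Finset.mem_univ j)) hμ)
  have hdvd : q ∣ Finset.univ.gcd fun j => p * c j :=
    Finset.dvd_gcd fun j _ => ⟨v j, (congrFun h j).symm⟩
  rw [Finset.gcd_mul_left, hunit.dvd_mul_right, dvd_normalize_iff] at hdvd
  obtain ⟨r, rfl⟩ := hdvd
  refine ⟨r, _root_.funext fun j => mul_left_cancel₀ hq ?_⟩
  simpa [mul_assoc] using congrFun h j

theorem RatFunc.denom_smul_eq_num_smul {K ι : Type*} [Field K] {x y : ι → K[X]} {f : RatFunc K}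
    (h : (fun i => algebraMap K[X] (RatFunc K) (x i)) =
      f • fun i => algebraMap K[X] (RatFunc K) (y i)) :
    f.denom • x = f.num • y := by
  funext i
  apply RatFunc.algebraMap_injective K
  have hi := congrFun h i
  have hf : f * algebraMap K[X] (RatFunc K) f.denom = algebraMap K[X] (RatFunc K) f.num := by
    nth_rw 1 [← RatFunc.num_div_denom f]
    exact div_mul_cancel₀ _ (RatFunc.algebraMap_ne_zero f.denom_ne_zero)
  simp only [Pi.smul_apply, smul_eq_mul, map_mul] at hi ⊢
  rw [hi]
  linear_combination algebraMap K[X] (RatFunc K) (y i) * hf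

theorem Function.Injective.sum_mul_extend_zero {ι κ R : Type*} [Fintype ι] [Fintype κ]
    [NonUnitalNonAssocSemiring R] {f : κ → ι} (hf : f.Injective) (g : ι → R) (c : κ → R) :
    ∑ t, g t * Function.extend f c 0 t = ∑ j, g (f j) * c j := by
  classical
  calc ∑ t, g t * Function.extend f c 0 t
        = ∑ t ∈ Finset.univ.image f, g t * Function.extend f c 0 t :=
        (Finset.sum_subset (Finset.subset_univ _) fun t _ ht => by
          rw [Function.extend_apply' _ _ _ (by simpa using ht), Pi.zero_apply, mul_zero]).symm
    _ = ∑ j, g (f j) * c j := by rw [Finset.sum_image hf.injOn]; simp [hf.extend_apply]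

noncomputable def pencilPoly (A B : Matrix (Fin n) (Fin n) ℂ) : Matrix (Fin n) (Fin n) ℂ[X] :=
  (X : ℂ[X]) • B.map C + A.map C

theorem pencilRat_eq_map (A B : Matrix (Fin n) (Fin n) ℂ) :
    pencilRat A B = (pencilPoly A B).map (algebraMap ℂ[X] (RatFunc ℂ)) := by
  ext i j
  simp only [pencilRat, pencilPoly, of_apply, map_apply, Matrix.add_apply, Matrix.smul_apply,
    smul_eq_mul, map_add, map_mul, RatFunc.algebraMap_X, RatFunc.algebraMap_C,
    RatFunc.algebraMap_eq_C]
  ring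

theorem pencilRat_mulVec_algebraMap_eq_zero_iff (A B : Matrix (Fin n) (Fin n) ℂ)
    (v : Fin n → ℂ[X]) :
    pencilRat A B *ᵥ (fun i => algebraMap ℂ[X] (RatFunc ℂ) (v i)) = 0 ↔
      pencilPoly A B *ᵥ v = 0 := by
  have h : pencilRat A B *ᵥ (fun i => algebraMap ℂ[X] (RatFunc ℂ) (v i)) =
      fun i => algebraMap ℂ[X] (RatFunc ℂ) ((pencilPoly A B *ᵥ v) i) := by
    ext i
    rw [RingHom.map_mulVec, pencilRat_eq_map]
    rfl
  rw [h, funext_iff, funext_iff]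
  simp

theorem isLeast_kernelDegrees {A B : Matrix (Fin n) (Fin n) ℂ}
    (hrank : n ≤ (pencilRat A B).rank + 1) {w : Fin n → ℂ[X]} (hw : pencilPoly A B *ᵥ w = 0)
    (hroot : ∀ μ : ℂ, ∃ i, (w i).eval μ ≠ 0) {d : ℕ} (hdeg : ∀ i, (w i).natDegree ≤ d)
    {i₀ : Fin n} (hi₀ : (w i₀).coeff d ≠ 0) : IsLeast (kernelDegrees A B) d := by
  have hw₀ : w i₀ ≠ 0 := fun h => hi₀ (by rw [h, coeff_zero])
  have hd : d ≤ (w i₀).natDegree := le_natDegree_of_ne_zero hi₀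
  have hwRat := (pencilRat_mulVec_algebraMap_eq_zero_iff A B w).mpr hw
  refine ⟨⟨w, fun h => hw₀ (congrFun h i₀), hwRat, le_antisymm
    (hd.trans (Finset.le_sup (f := fun i => (w i).natDegree) (Finset.mem_univ i₀)))
    (Finset.sup_le fun i _ => hdeg i)⟩, ?_⟩
  rintro _ ⟨v, hv₀, hv, rfl⟩
  obtain ⟨f, hf⟩ := (pencilRat A B).exists_smul_eq_of_mulVec_eq_zero (by simpa using hrank) hv
    hwRat fun h => hw₀ (RatFunc.algebraMap_injective ℂ (by simpa using congrFun h i₀))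
  obtain ⟨r, rfl⟩ := exists_eq_smul_of_smul_eq_smul hroot f.denom_ne_zero
    (RatFunc.denom_smul_eq_num_smul hf)
  have hr : r ≠ 0 := by rintro rfl; exact hv₀ (zero_smul _ w)
  calc d ≤ (w i₀).natDegree := hd
    _ ≤ (r * w i₀).natDegree := natDegree_le_of_dvd (dvd_mul_left _ _) (mul_ne_zero hr hw₀)
    _ ≤ _ := Finset.le_sup (f := fun i => ((r • w) i).natDegree) (Finset.mem_univ i₀)

def leadingBlock {α : Type*} (k : Fin n) (M : Matrix (Fin n) (Fin n) α) :
    Matrix (Fin k) (Fin (k + 1)) α :=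
  M.submatrix (Fin.castLE k.2.le) (Fin.castLE k.2)

theorem UpperTri.apply_eq_zero_of_le {M : Matrix (Fin n) (Fin n) ℂ} (hM : UpperTri M) {k : Fin n}
    (hk : M k k = 0) (i j : Fin n) (hki : k ≤ i) (hjk : j ≤ k) : M i j = 0 := by
  rcases hjk.lt_or_eq with hjk | rfl
  · exact hM i j (hjk.trans_le hki)
  · rcases hki.lt_or_eq with hki | rfl
    exacts [hM i j hki, hk]

theorem Fin.le_of_notMem_range_castLE {k : ℕ} (hk : k ≤ n) {i : Fin n}
    (hi : i ∉ Set.range (Fin.castLE hk)) : k ≤ i := by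
  by_contra h
  exact hi ⟨⟨i, not_le.mp h⟩, rfl⟩

theorem le_rank_leadingBlock {K : Type*} [Field K] {k : Fin n} {M : Matrix (Fin n) (Fin n) K}
    (hM : ∀ i j, k ≤ i → j ≤ k → M i j = 0) (hrank : n - 1 ≤ M.rank) :
    (k : ℕ) ≤ (leadingBlock k M).rank := by
  have hcols := M.rank_le_rank_submatrix_add_card (Fin.castLE k.2) (Fin.castLE_injective k.2)
  have hrows := (M.submatrix id (Fin.castLE k.2)).rank_le_rank_submatrix_of_row_eq_zero
    (Fin.castLE k.2.le) fun i hi => funext fun j =>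
      hM i _ (Fin.le_of_notMem_range_castLE _ hi) (Nat.lt_succ_iff.mp j.2)
  simp only [Fintype.card_fin, submatrix_submatrix] at hcols hrows
  change _ ≤ (leadingBlock k M).rank at hrows
  omega

theorem mulVec_extend_signedMinors_leadingBlock {R : Type*} [CommRing R] {k : Fin n}
    {M : Matrix (Fin n) (Fin n) R} (hM : ∀ i j, k ≤ i → j ≤ k → M i j = 0) :
    M *ᵥ Function.extend (Fin.castLE k.2) (signedMinors (leadingBlock k M)) 0 = 0 := by
  ext i
  rw [mulVec, dotProduct, (Fin.castLE_injective k.2).sum_mul_extend_zero, Pi.zero_apply]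
  by_cases hi : (i : ℕ) < k
  · exact congrFun (mulVec_signedMinors (leadingBlock k M)) ⟨i, hi⟩
  · exact Finset.sum_eq_zero fun j _ => by
      rw [hM i _ (not_lt.mp hi) (Nat.lt_succ_iff.mp j.2), zero_mul]

theorem minimal_index_of_triangular_pencil_general (A B : Matrix (Fin n) (Fin n) ℂ)
    (hA : UpperTri A) (hB : UpperTri B)
    (hrank : (pencilRat A B).rank = n - 1)
    (heig : ∀ μ : ℂ, (A + μ • B).rank = n - 1) (heiginf : B.rank = n - 1)
    (k : Fin n) (hzero : A k k = 0 ∧ B k k = 0) :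
    IsLeast (kernelDegrees A B) (k : ℕ) := by
  have hA' := hA.apply_eq_zero_of_le hzero.1
  have hB' := hB.apply_eq_zero_of_le hzero.2
  have hinj := Fin.castLE_injective k.2
  set c := signedMinors (leadingBlock k (pencilPoly A B))
  have hc : c = signedMinors ((X : ℂ[X]) • (leadingBlock k B).map C + (leadingBlock k A).map C) :=
    rfl
  obtain ⟨j₀, hj₀⟩ := Function.ne_iff.mp
    (signedMinors_ne_zero _ (le_rank_leadingBlock hB' heiginf.ge))
  refine isLeast_kernelDegrees (by omega) (w := Function.extend (Fin.castLE k.2) c 0)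
    (mulVec_extend_signedMinors_leadingBlock fun i j hi hj => by
      simp [pencilPoly, hA' i j hi hj, hB' i j hi hj])
    (fun μ => ?_) (fun i => ?_) (i₀ := Fin.castLE k.2 j₀) ?_
  · obtain ⟨j, hj⟩ := Function.ne_iff.mp (signedMinors_ne_zero _ (le_rank_leadingBlock
      (fun i j hi hj => by simp [hA' i j hi hj, hB' i j hi hj]) (heig μ).ge))
    exact ⟨Fin.castLE k.2 j, by rwa [hinj.extend_apply, hc, eval_signedMinors_X_smul_add]⟩
  · by_cases hi : ∃ j, Fin.castLE k.2 j = i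
    · obtain ⟨j, rfl⟩ := hi
      rw [hinj.extend_apply, hc]
      exact natDegree_signedMinors_X_smul_add_le _ _ j
    · simp [Function.extend_apply' _ _ _ hi]
  · rwa [hinj.extend_apply, hc, coeff_signedMinors_X_smul_add]

/-- For a singular upper triangular pencil of normal rank `n-1` with no eigenvalues,
if the uppermost zero diagonal entry is in position `k+1` (0-based index `k`), then
the right minimal index equals `k`. -/
theorem minimal_index_of_triangular_pencil (A B : Matrix (Fin n) (Fin n) ℂ)
    (hA : UpperTri A) (hB : UpperTri B)
    (hrank : (pencilRat A B).rank = n - 1)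
    (heig : ∀ μ : ℂ, (A + μ • B).rank = n - 1) (heiginf : B.rank = n - 1)
    (k : Fin n) (hzero : A k k = 0 ∧ B k k = 0)
    (huppermost : ∀ i : Fin n, i < k → ¬(A i i = 0 ∧ B i i = 0)) :
    IsLeast (kernelDegrees A B) (k : ℕ) :=
  minimal_index_of_triangular_pencil_general A B hA hB hrank heig heiginf k hzero
end

section
/- Let A + λB ∈ ℂ[λ]₁^{n×n}, fix k with 0 ≤ k ≤ n−1, and define f_{k+1}(Q,Z) = Σ_{i>j}(|(QAZ)_{ij}|² + |(QBZ)_{ij}|²) + |(QAZ)_{k+1,k+1}|² + |(QBZ)_{k+1,k+1}|² for (Q,Z) ∈ U(n)×U(n). Then the minimum of the Frobenius distance from A + λB to the set Schur_n^{k+1} (pencils admitting a generalized Schur form with zero (k+1,k+1) entry) equals the minimum of √(f_{k+1}(Q,Z)) over U(n)×U(n); moreover (Q₀,Z₀) is a global minimizer of f_{k+1} if and only if Q₀* P_{k+1}(Q₀AZ₀) Z₀* + λ Q₀* P_{k+1}(Q₀BZ₀) Z₀* is a nearest pencil in Schur_n^{k+1} to A + λB. -/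
open Matrix

variable {n : ℕ}

noncomputable def pencilNormSq (A B : Matrix (Fin n) (Fin n) ℂ) : ℝ :=
  (∑ i, ∑ j, ‖A i j‖ ^ 2) + ∑ i, ∑ j, ‖B i j‖ ^ 2

/-- Frobenius distance between the pencils `A + λB` and `S + λT`. -/
noncomputable def pencilDist (A B S T : Matrix (Fin n) (Fin n) ℂ) : ℝ :=
  Real.sqrt (pencilNormSq (A - S) (B - T))

def Pk (k : Fin n) (A : Matrix (Fin n) (Fin n) ℂ) : Matrix (Fin n) (Fin n) ℂ :=
  Matrix.of fun i j => if i < j ∨ (i = j ∧ i ≠ k) then A i j else 0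

/-- The set of pencils admitting a generalized Schur form with zero `(k,k)` entry. -/
def SchurSet (n : ℕ) (k : Fin n) :
    Set (Matrix (Fin n) (Fin n) ℂ × Matrix (Fin n) (Fin n) ℂ) :=
  {p | ∃ Q Z : Matrix (Fin n) (Fin n) ℂ,
    Q ∈ Matrix.unitaryGroup (Fin n) ℂ ∧ Z ∈ Matrix.unitaryGroup (Fin n) ℂ ∧
    UpperTri (Q * p.1 * Z) ∧ UpperTri (Q * p.2 * Z) ∧
    (Q * p.1 * Z) k k = 0 ∧ (Q * p.2 * Z) k k = 0}

/-- The smooth objective `f_{k+1}(Q,Z)`. -/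
noncomputable def objFunK (k : Fin n) (A B Q Z : Matrix (Fin n) (Fin n) ℂ) : ℝ :=
  (∑ i, ∑ j, if j < i then ‖(Q * A * Z) i j‖ ^ 2 + ‖(Q * B * Z) i j‖ ^ 2 else 0) +
    (‖(Q * A * Z) k k‖ ^ 2 + ‖(Q * B * Z) k k‖ ^ 2)

/-!
Conjugation by a pair of unitaries `(Q, Z)` preserves the Frobenius distance, so the distance
from `A + λB` to a pencil whose `(Q, Z)`-Schur form is upper triangular with zero `(k+1, k+1)`
entries equals the distance from `QAZ + λQBZ` to that triangular pencil. Entrywise, the nearest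
such triangular pencil is `P_{k+1}(QAZ) + λP_{k+1}(QBZ)`, at squared distance `f_{k+1}(Q, Z)`.
So every pencil of `Schur_n^{k+1}` is at distance at least `√f_{k+1}(Q, Z)` for its own `(Q, Z)`,
while `Qᴴ P_{k+1}(QAZ) Zᴴ + λ Qᴴ P_{k+1}(QBZ) Zᴴ` lies in `Schur_n^{k+1}` at distance exactly
`√f_{k+1}(Q, Z)`; both the equality of infima and the characterization of minimizers follow.
-/

section Frobenius

variable {𝕜 m l : Type*} [RCLike 𝕜] [Fintype m] [Fintype l]

noncomputable def frobSq (M : Matrix m l 𝕜) : ℝ := ∑ i, ∑ j, ‖M i j‖ ^ 2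

lemma frobSq_eq_re_trace (M : Matrix m l 𝕜) : frobSq M = RCLike.re (M * Mᴴ).trace := by
  simp only [frobSq, trace, diag_apply, mul_apply, conjTranspose_apply, RCLike.star_def,
    RCLike.mul_conj, map_sum]
  norm_cast

variable [DecidableEq m] [DecidableEq l] {Q : Matrix m m 𝕜} {Z : Matrix l l 𝕜}

lemma frobSq_unitary_mul_mul (hQ : Q ∈ unitaryGroup m 𝕜) (hZ : Z ∈ unitaryGroup l 𝕜)
    (M : Matrix m l 𝕜) : frobSq (Q * M * Z) = frobSq M := by
  have hZ' : Z * Zᴴ = 1 := hZ.2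
  have hQ' : Qᴴ * Q = 1 := hQ.1
  rw [frobSq_eq_re_trace, frobSq_eq_re_trace, conjTranspose_mul, conjTranspose_mul,
    show Q * M * Z * (Zᴴ * (Mᴴ * Qᴴ)) = Q * (M * Mᴴ) * Qᴴ by
      simp only [Matrix.mul_assoc, ← Matrix.mul_assoc Z, hZ', Matrix.one_mul],
    trace_mul_cycle, hQ', Matrix.one_mul]

lemma frobSq_sub_eq_frobSq_unitary_conj (hQ : Q ∈ unitaryGroup m 𝕜) (hZ : Z ∈ unitaryGroup l 𝕜)
    (M S : Matrix m l 𝕜) : frobSq (M - S) = frobSq (Q * M * Z - Q * S * Z) := by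
  rw [← frobSq_unitary_mul_mul hQ hZ (M - S), Matrix.mul_sub, Matrix.sub_mul]

lemma unitary_mul_conjTranspose_mul_mul (hQ : Q ∈ unitaryGroup m 𝕜)
    (hZ : Z ∈ unitaryGroup l 𝕜) (M : Matrix m l 𝕜) : Q * (Qᴴ * M * Zᴴ) * Z = M := by
  have hQ' : Q * Qᴴ = 1 := hQ.2
  have hZ' : Zᴴ * Z = 1 := hZ.1
  simp only [← Matrix.mul_assoc, hQ', Matrix.one_mul]
  rw [Matrix.mul_assoc, hZ', Matrix.mul_one]

end Frobenius

lemma pencilNormSq_eq_frobSq_add (A B : Matrix (Fin n) (Fin n) ℂ) :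
    pencilNormSq A B = frobSq A + frobSq B := rfl

section Projection

variable {k : Fin n} {M U : Matrix (Fin n) (Fin n) ℂ}

lemma upperTri_Pk (k : Fin n) (M : Matrix (Fin n) (Fin n) ℂ) : UpperTri (Pk k M) := by
  intro i j hji
  simp only [Pk, of_apply, ite_eq_right_iff]
  rintro (hij | ⟨rfl, -⟩) <;> order

lemma Pk_apply_self (k : Fin n) (M : Matrix (Fin n) (Fin n) ℂ) : Pk k M k k = 0 := by
  simp [Pk]

lemma sub_Pk_apply (k : Fin n) (M : Matrix (Fin n) (Fin n) ℂ) (i j : Fin n) :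
    (M - Pk k M) i j = if j < i ∨ (i = k ∧ j = k) then M i j else 0 := by
  simp only [Matrix.sub_apply, Pk, of_apply]
  grind

lemma frobSq_sub_Pk (k : Fin n) (M : Matrix (Fin n) (Fin n) ℂ) :
    frobSq (M - Pk k M) = (∑ i, ∑ j, if j < i then ‖M i j‖ ^ 2 else 0) + ‖M k k‖ ^ 2 := by
  have h : ∀ i j, ‖(M - Pk k M) i j‖ ^ 2 =
      (if j < i then ‖M i j‖ ^ 2 else 0) + if i = k ∧ j = k then ‖M i j‖ ^ 2 else 0 := by
    intro i j
    rw [sub_Pk_apply]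
    split_ifs <;> grind [norm_zero]
  simp only [frobSq, h, Finset.sum_add_distrib]
  simp [ite_and]

lemma frobSq_sub_Pk_le (hU : UpperTri U) (hUk : U k k = 0) :
    frobSq (M - Pk k M) ≤ frobSq (M - U) := by
  refine Finset.sum_le_sum fun i _ => Finset.sum_le_sum fun j _ => ?_
  rw [sub_Pk_apply]
  split_ifs with h
  · obtain h | ⟨rfl, rfl⟩ := h
    · simp [hU i j h]
    · simp [hUk]
  · simp

lemma objFunK_eq_frobSq_add (k : Fin n) (A B Q Z : Matrix (Fin n) (Fin n) ℂ) :
    objFunK k A B Q Z =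
      frobSq (Q * A * Z - Pk k (Q * A * Z)) + frobSq (Q * B * Z - Pk k (Q * B * Z)) := by
  simp only [objFunK, frobSq_sub_Pk, ite_add_zero, Finset.sum_add_distrib]
  ring

lemma objFunK_nonneg (k : Fin n) (A B Q Z : Matrix (Fin n) (Fin n) ℂ) :
    0 ≤ objFunK k A B Q Z := by
  rw [objFunK_eq_frobSq_add, frobSq, frobSq]
  positivity

end Projection

section Pencil

variable {k : Fin n} {Q Z : Matrix (Fin n) (Fin n) ℂ}

lemma conj_Pk_mem_schurSet (hQ : Q ∈ unitaryGroup (Fin n) ℂ) (hZ : Z ∈ unitaryGroup (Fin n) ℂ)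
    (A B : Matrix (Fin n) (Fin n) ℂ) :
    (Qᴴ * Pk k (Q * A * Z) * Zᴴ, Qᴴ * Pk k (Q * B * Z) * Zᴴ) ∈ SchurSet n k := by
  refine ⟨Q, Z, hQ, hZ, ?_⟩
  simp only [unitary_mul_conjTranspose_mul_mul hQ hZ]
  exact ⟨upperTri_Pk k _, upperTri_Pk k _, Pk_apply_self k _, Pk_apply_self k _⟩

lemma pencilDist_conj_Pk {A B : Matrix (Fin n) (Fin n) ℂ} (hQ : Q ∈ unitaryGroup (Fin n) ℂ)
    (hZ : Z ∈ unitaryGroup (Fin n) ℂ) :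
    pencilDist A B (Qᴴ * Pk k (Q * A * Z) * Zᴴ) (Qᴴ * Pk k (Q * B * Z) * Zᴴ) =
      √(objFunK k A B Q Z) := by
  rw [pencilDist, pencilNormSq_eq_frobSq_add, objFunK_eq_frobSq_add,
    frobSq_sub_eq_frobSq_unitary_conj hQ hZ A, frobSq_sub_eq_frobSq_unitary_conj hQ hZ B,
    unitary_mul_conjTranspose_mul_mul hQ hZ, unitary_mul_conjTranspose_mul_mul hQ hZ]

lemma exists_sqrt_objFunK_le_pencilDist (A B : Matrix (Fin n) (Fin n) ℂ)
    {p : Matrix (Fin n) (Fin n) ℂ × Matrix (Fin n) (Fin n) ℂ} (hp : p ∈ SchurSet n k) :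
    ∃ Q Z, Q ∈ unitaryGroup (Fin n) ℂ ∧ Z ∈ unitaryGroup (Fin n) ℂ ∧
      √(objFunK k A B Q Z) ≤ pencilDist A B p.1 p.2 := by
  obtain ⟨Q, Z, hQ, hZ, hS, hT, hSk, hTk⟩ := hp
  refine ⟨Q, Z, hQ, hZ, Real.sqrt_le_sqrt ?_⟩
  rw [pencilNormSq_eq_frobSq_add, objFunK_eq_frobSq_add,
    frobSq_sub_eq_frobSq_unitary_conj hQ hZ A, frobSq_sub_eq_frobSq_unitary_conj hQ hZ B]
  exact add_le_add (frobSq_sub_Pk_le hS hSk) (frobSq_sub_Pk_le hT hTk)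

end Pencil

/-- The distance from `A + λB` to `Schur_n^{k+1}` equals the minimum of
`√(f_{k+1}(Q,Z))` over `U(n) × U(n)`, and `(Q₀,Z₀)` is a global minimizer of `f_{k+1}`
iff the associated projected pencil is a nearest point of `Schur_n^{k+1}`. -/
theorem nearest_pencil_with_prescribed_minimal_index (A B : Matrix (Fin n) (Fin n) ℂ)
    (k : ℕ) (hk : k < n) :
    (sInf {d : ℝ | ∃ p ∈ SchurSet n ⟨k, hk⟩, d = pencilDist A B p.1 p.2} =
      sInf {d : ℝ | ∃ Q Z : Matrix (Fin n) (Fin n) ℂ,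
        Q ∈ Matrix.unitaryGroup (Fin n) ℂ ∧ Z ∈ Matrix.unitaryGroup (Fin n) ℂ ∧
        d = Real.sqrt (objFunK ⟨k, hk⟩ A B Q Z)}) ∧
    ∀ Q₀ Z₀ : Matrix (Fin n) (Fin n) ℂ,
      Q₀ ∈ Matrix.unitaryGroup (Fin n) ℂ → Z₀ ∈ Matrix.unitaryGroup (Fin n) ℂ →
      ((∀ Q Z : Matrix (Fin n) (Fin n) ℂ,
          Q ∈ Matrix.unitaryGroup (Fin n) ℂ → Z ∈ Matrix.unitaryGroup (Fin n) ℂ →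
          objFunK ⟨k, hk⟩ A B Q₀ Z₀ ≤ objFunK ⟨k, hk⟩ A B Q Z) ↔
        ((Q₀ᴴ * Pk ⟨k, hk⟩ (Q₀ * A * Z₀) * Z₀ᴴ, Q₀ᴴ * Pk ⟨k, hk⟩ (Q₀ * B * Z₀) * Z₀ᴴ)
            ∈ SchurSet n ⟨k, hk⟩ ∧
          ∀ p ∈ SchurSet n ⟨k, hk⟩,
            pencilDist A B (Q₀ᴴ * Pk ⟨k, hk⟩ (Q₀ * A * Z₀) * Z₀ᴴ)
                (Q₀ᴴ * Pk ⟨k, hk⟩ (Q₀ * B * Z₀) * Z₀ᴴ) ≤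
              pencilDist A B p.1 p.2)) := by
  refine ⟨csInf_eq_csInf_of_forall_exists_le ?_ ?_,
    fun Q₀ Z₀ hQ₀ hZ₀ => ⟨fun hmin => ⟨conj_Pk_mem_schurSet hQ₀ hZ₀ A B, fun p hp => ?_⟩,
      fun hnear Q Z hQ hZ => ?_⟩⟩
  · rintro _ ⟨p, hp, rfl⟩
    obtain ⟨Q, Z, hQ, hZ, hle⟩ := exists_sqrt_objFunK_le_pencilDist A B hp
    exact ⟨_, ⟨Q, Z, hQ, hZ, rfl⟩, hle⟩
  · rintro _ ⟨Q, Z, hQ, hZ, rfl⟩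
    exact ⟨_, ⟨_, conj_Pk_mem_schurSet hQ hZ A B, (pencilDist_conj_Pk hQ hZ).symm⟩, le_rfl⟩
  · obtain ⟨Q, Z, hQ, hZ, hle⟩ := exists_sqrt_objFunK_le_pencilDist A B hp
    rw [pencilDist_conj_Pk hQ₀ hZ₀]
    exact (Real.sqrt_le_sqrt (hmin Q Z hQ hZ)).trans hle
  · have hle := hnear.2 _ (conj_Pk_mem_schurSet hQ hZ A B)
    rw [pencilDist_conj_Pk hQ₀ hZ₀, pencilDist_conj_Pk hQ hZ] at hle
    exact (Real.sqrt_le_sqrt_iff (objFunK_nonneg _ A B Q Z)).1 hle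
end
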